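/- arXiv:2402.17137 — 6 statements merged into one kernel-verified Lean document; each statement's English description precedes it below -/
import Mathlib

section
/- For every finite set X of vertices of the shift graph Sh(2,ℕ) (vertices are 2-element subsets of ℕ, with {x,y} adjacent to {y,z} when x<y<z) and every stochastic weight vector w: X → [0,1] (i.e., the weights sum to 1), there exists an independent set I ⊆ X of Sh(2,ℕ) with ∑_{i∈I} w(i) ≥ 1/4. -/
/-!
For `A ⊆ ℕ`, the vertices `{x, y}`, `x < y`, with `x ∉ A` and `y ∈ A` are pairwise non-adjacent:
adjacent `{x, y}`, `{y, z}` would need both `y ∈ A` and `y ∉ A`. If `A` is a uniformly random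
subset of the endpoints of `X`, each vertex of `X` is caught this way with probability `1/4`,
so some `A` catches at least a quarter of the weight.
-/

/-- Vertices of the shift graph `Sh(2,ℕ)`: ordered pairs `(i,j)` with `i < j`. -/
def ShVert : Type := {p : ℕ × ℕ // p.1 < p.2}

/-- Adjacency in the shift graph: `{x,y}` and `{y,z}` with `x < y < z`. -/
def ShAdj (p q : ShVert) : Prop := p.1.2 = q.1.1 ∨ q.1.2 = p.1.1

open Finset

section Averaging

variable {α β : Type*} [DecidableEq α]

theorem card_filter_powerset_notMem_and_mem {S : Finset α} {i j : α} (hij : i ≠ j)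
    (hi : i ∈ S) (hj : j ∈ S) :
    #{A ∈ S.powerset | i ∉ A ∧ j ∈ A} = 2 ^ (#S - 2) := by
  have hcard : #((S.erase i).erase j) = #S - 2 := by
    rw [card_erase_of_mem (mem_erase.2 ⟨hij.symm, hj⟩), card_erase_of_mem hi]; omega
  rw [← hcard, ← card_powerset]
  refine card_nbij' (·.erase j) (insert j) ?_ ?_ ?_ ?_
  · intro A hA
    simp only [coe_filter, mem_powerset, Set.mem_ofPred_eq, mem_coe] at hA ⊢
    intro x hx
    simp only [mem_erase] at hx ⊢
    exact ⟨hx.1, fun h => hA.2.1 (h ▸ hx.2), hA.1 hx.2⟩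
  · intro A hA
    simp only [coe_filter, mem_powerset, Set.mem_ofPred_eq, mem_coe] at hA ⊢
    refine ⟨insert_subset hj (hA.trans ((erase_subset _ _).trans (erase_subset _ _))), ?_,
      mem_insert_self _ _⟩
    rw [mem_insert, not_or]
    exact ⟨hij, fun h => by simpa using hA h⟩
  · intro A hA
    simp only [coe_filter, mem_powerset, Set.mem_ofPred_eq] at hA
    exact insert_erase hA.2.2
  · intro A hA
    simp only [mem_coe, mem_powerset] at hA
    exact erase_insert fun h => by simpa using hA h

variable {M : Type*} [AddCommMonoid M]

theorem sum_powerset_sum_filter_notMem_and_mem {S : Finset α} {X : Finset β} (w : β → M)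
    {a b : β → α} (hab : ∀ x ∈ X, a x ≠ b x) (ha : ∀ x ∈ X, a x ∈ S) (hb : ∀ x ∈ X, b x ∈ S) :
    ∑ A ∈ S.powerset, ∑ x ∈ X with a x ∉ A ∧ b x ∈ A, w x = 2 ^ (#S - 2) • ∑ x ∈ X, w x := by
  simp_rw [sum_filter]
  rw [sum_comm, smul_sum]
  refine sum_congr rfl fun x hx => ?_
  rw [← sum_filter, sum_const, card_filter_powerset_notMem_and_mem (hab x hx) (ha x hx) (hb x hx)]

theorem exists_quarter_le_sum_filter_notMem_and_mem {K : Type*} [Field K]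
    [LinearOrder K] [IsStrictOrderedRing K] {S : Finset α} {X : Finset β} (w : β → K)
    {a b : β → α} (hab : ∀ x ∈ X, a x ≠ b x) (ha : ∀ x ∈ X, a x ∈ S) (hb : ∀ x ∈ X, b x ∈ S) :
    ∃ A ⊆ S, (∑ x ∈ X, w x) / 4 ≤ ∑ x ∈ X with a x ∉ A ∧ b x ∈ A, w x := by
  obtain rfl | ⟨x, hx⟩ := X.eq_empty_or_nonempty
  · exact ⟨∅, empty_subset _, by simp⟩
  have hS : 2 ≤ #S := by
    calc 2 = #{a x, b x} := (card_pair (hab x hx)).symm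
      _ ≤ #S := card_le_card (insert_subset (ha x hx) (singleton_subset_iff.2 (hb x hx)))
  have hpow : (2 : K) ^ #S = 2 ^ (#S - 2) * 4 := by
    rw [← Nat.sub_add_cancel hS, pow_add, Nat.add_sub_cancel]; norm_num
  have hmean : ∑ _A ∈ S.powerset, (∑ x ∈ X, w x) / 4
      = ∑ A ∈ S.powerset, ∑ x ∈ X with a x ∉ A ∧ b x ∈ A, w x := by
    rw [sum_powerset_sum_filter_notMem_and_mem w hab ha hb, sum_const, card_powerset,
      nsmul_eq_mul, nsmul_eq_mul, Nat.cast_pow, Nat.cast_pow, Nat.cast_ofNat, hpow]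
    ring
  obtain ⟨A, hA, hle⟩ := exists_le_of_sum_le ⟨∅, empty_mem_powerset S⟩ hmean.le
  exact ⟨A, mem_powerset.1 hA, hle⟩

end Averaging

theorem not_shAdj_of_notMem_of_mem {A : Set ℕ} {p q : ShVert} (hp : p.1.1 ∉ A ∧ p.1.2 ∈ A)
    (hq : q.1.1 ∉ A ∧ q.1.2 ∈ A) : ¬ ShAdj p q
  | .inl h => hq.1 (h ▸ hp.2)
  | .inr h => hp.1 (h ▸ hq.2)

theorem shift_graph_weighted_independent_set_general
    (X : Finset ShVert) (w : ShVert → ℝ)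
    (hw1 : ∑ x ∈ X, w x = 1) :
    ∃ I ⊆ X, (∀ p ∈ I, ∀ q ∈ I, ¬ ShAdj p q) ∧ (1/4 : ℝ) ≤ ∑ i ∈ I, w i := by
  obtain ⟨A, -, hA⟩ := exists_quarter_le_sum_filter_notMem_and_mem
    (S := X.image (·.1.1) ∪ X.image (·.1.2)) w (fun x _ => x.2.ne)
    (fun _ hx => mem_union_left _ (mem_image_of_mem _ hx))
    (fun _ hx => mem_union_right _ (mem_image_of_mem _ hx))
  refine ⟨{x ∈ X | x.1.1 ∉ A ∧ x.1.2 ∈ A}, filter_subset _ _, ?_, by rwa [hw1] at hA⟩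
  exact fun p hp q hq =>
    not_shAdj_of_notMem_of_mem (A := A) (mem_filter.1 hp).2 (mem_filter.1 hq).2

/-- For every finite set of vertices of `Sh(2,ℕ)` and every stochastic weight vector on it,
there is an independent set carrying at least `1/4` of the total weight. -/
theorem shift_graph_weighted_independent_set
    (X : Finset ShVert) (w : ShVert → ℝ)
    (hw01 : ∀ x ∈ X, 0 ≤ w x ∧ w x ≤ 1)
    (hw1 : ∑ x ∈ X, w x = 1) :
    ∃ I ⊆ X, (∀ p ∈ I, ∀ q ∈ I, ¬ ShAdj p q) ∧ (1/4 : ℝ) ≤ ∑ i ∈ I, w i :=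
  shift_graph_weighted_independent_set_general X w hw1
end

section
/- Let a, γ > 0 with β = a/√(2(1+γ+γ²)) and y_{\{i,j\}} = β·e_i − βγ·e_j for i<j as above. Then for distinct pairs e, e', we have ‖y_e − y_{e'}‖ = a if and only if e and e' are adjacent in the shift graph Sh(2,ℕ), i.e., max(e) = min(e') or max(e') = min(e). -/
/-!
Since `‖y_e‖² = β²(1 + γ²)`, we have `‖y_e - y_{e'}‖² = 2β²(1 + γ²) - 2⟪y_e, y_{e'}⟫`, which equals
`a² = 2β²(1 + γ + γ²)` exactly when `⟪y_e, y_{e'}⟫ = -β²γ`. By orthonormality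
`⟪y_{ij}, y_{i'j'}⟫ = β²(δ_{ii'} - γ δ_{ij'} - γ δ_{ji'} + γ² δ_{jj'})`, and as `i < j`, `i' < j'`
at most one of these deltas is nonzero unless `e = e'`. So the value `-β²γ` occurs precisely
when `j' = i` or `j = i'`.
-/

open RealInnerProductSpace

section
variable {ι H : Type*} [NormedAddCommGroup H] [InnerProductSpace ℝ H] [DecidableEq ι] {e : ι → H}

theorem Orthonormal.inner_smul_sub_smul (he : Orthonormal ℝ e) (p q r s : ℝ) (i j k l : ι) :
    ⟪p • e i - q • e j, r • e k - s • e l⟫ =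
      p * r * (if i = k then 1 else 0) - p * s * (if i = l then 1 else 0)
        - q * r * (if j = k then 1 else 0) + q * s * (if j = l then 1 else 0) := by
  simp only [inner_sub_left, inner_sub_right, real_inner_smul_left, real_inner_smul_right,
    orthonormal_iff_ite.mp he]
  ring

theorem Orthonormal.norm_smul_sub_smul_sq (he : Orthonormal ℝ e) (p q : ℝ) {i j : ι}
    (hij : i ≠ j) : ‖p • e i - q • e j‖ ^ 2 = p ^ 2 + q ^ 2 := by
  rw [← real_inner_self_eq_norm_sq, he.inner_smul_sub_smul]
  simp only [↓reduceIte, mul_one, hij, mul_zero, sub_zero, hij.symm]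
  ring

end

theorem shift_overlap_eq_neg_iff {γ : ℝ} (hγ : 0 < γ) {i j i' j' : ℕ} (hij : i < j)
    (hij' : i' < j') :
    (if i = i' then 1 else 0) - γ * (if i = j' then 1 else 0) - γ * (if j = i' then 1 else 0)
        + γ ^ 2 * (if j = j' then 1 else 0) = -γ ↔ j = i' ∨ j' = i := by
  split_ifs <;> constructor <;> intro h <;> first | omega | nlinarith

theorem dist_eq_a_iff_shift_adjacent_general
    {H : Type*} [NormedAddCommGroup H] [InnerProductSpace ℝ H]
    (e : ℕ → H) (he : Orthonormal ℝ e)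
    (a γ β : ℝ) (ha : 0 < a) (hγ : 0 < γ)
    (hβ : β = a / Real.sqrt (2 * (1 + γ + γ^2)))
    (y : ℕ → ℕ → H) (hy : ∀ i j : ℕ, i < j → y i j = β • e i - (β * γ) • e j)
    (i j i' j' : ℕ) (hij : i < j) (hij' : i' < j') :
    ‖y i j - y i' j'‖ = a ↔ (j = i' ∨ j' = i) := by
  have hpos : 0 < 2 * (1 + γ + γ ^ 2) := by positivity
  have ha_sq : a ^ 2 = 2 * (1 + γ + γ ^ 2) * β ^ 2 := by
    rw [hβ, div_pow, Real.sq_sqrt hpos.le]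
    field_simp
  have hβ_sq : β ^ 2 ≠ 0 := by
    rw [hβ]
    positivity
  rw [hy i j hij, hy i' j' hij', ← sq_eq_sq₀ (norm_nonneg _) ha.le, norm_sub_sq_real,
    he.norm_smul_sub_smul_sq _ _ hij.ne, he.norm_smul_sub_smul_sq _ _ hij'.ne,
    he.inner_smul_sub_smul, ← shift_overlap_eq_neg_iff hγ hij hij', ha_sq]
  constructor <;> intro h
  · apply mul_left_cancel₀ hβ_sq
    linear_combination (-1 / 2 : ℝ) * h
  · linear_combination (-2 * β ^ 2) * h

/-- For distinct pairs `e = {i,j}`, `e' = {i',j'}`, the distance between `y_e` and `y_{e'}`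
equals `a` if and only if the two pairs are adjacent in the shift graph `Sh(2,ℕ)`,
i.e. the maximum of one is the minimum of the other. -/
theorem dist_eq_a_iff_shift_adjacent
    {H : Type*} [NormedAddCommGroup H] [InnerProductSpace ℝ H]
    (e : ℕ → H) (he : Orthonormal ℝ e)
    (a γ β : ℝ) (ha : 0 < a) (hγ : 0 < γ)
    (hβ : β = a / Real.sqrt (2 * (1 + γ + γ^2)))
    (y : ℕ → ℕ → H) (hy : ∀ i j : ℕ, i < j → y i j = β • e i - (β * γ) • e j)
    (i j i' j' : ℕ) (hij : i < j) (hij' : i' < j') (hne : (i, j) ≠ (i', j')) :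
    ‖y i j - y i' j'‖ = a ↔ (j = i' ∨ j' = i) :=
  dist_eq_a_iff_shift_adjacent_general e he a γ β ha hγ hβ y hy i j i' j' hij hij'
end

section
/- The configuration Y_A = { β·e_i − βγ·e_j : i < j } ⊆ ℓ² (with β, γ > 0) contains no equilateral triangle with all three side lengths equal to a = β√(2(1+γ+γ²)), provided γ ≠ 1 or more generally provided the four possible squared distances 2β²γ², 2β², 2β²(1+γ+γ²), 2β²(1+γ²) are such that only 2β²(1+γ+γ²) equals a²: there are no three points of Y_A pairwise at distance a. -/
/-!
Expanding `‖y_{ij} - y_{kl}‖²` in the orthonormal family shows that, unless the pairs are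
chained (`i = l` or `j = k`), the squared distance is `2β²([i ≠ k] + γ²[j ≠ l])`, one of
`0, 2β²γ², 2β², 2β²(1+γ²)`, none of which is `a²`. So the three pairs of a triangle with
side `a` would be pairwise chained, and for pairs `i < j` this forces a cycle `i < ⋯ < i`.
-/

open RealInnerProductSpace

section

variable {ι H : Type*} [NormedAddCommGroup H] [InnerProductSpace ℝ H] {e : ι → H}

theorem Orthonormal.dist_sq_of_not_chained [DecidableEq ι] (he : Orthonormal ℝ e) (β γ : ℝ)
    {i j k l : ι} (hij : i ≠ j) (hkl : k ≠ l) (hil : i ≠ l) (hjk : j ≠ k) :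
    dist (β • e i - (β * γ) • e j) (β • e k - (β * γ) • e l) ^ 2 =
      2 * β ^ 2 * ((if i = k then 0 else 1) + γ ^ 2 * (if j = l then 0 else 1)) := by
  rw [dist_eq_norm, ← real_inner_self_eq_norm_sq]
  simp only [inner_sub_left, inner_sub_right, real_inner_smul_left, real_inner_smul_right,
    orthonormal_iff_ite.mp he, hij, hkl, hil, hjk, hij.symm, hkl.symm, hil.symm, hjk.symm,
    if_true, if_false, eq_comm (a := k) (b := i), eq_comm (a := l) (b := j)]
  split_ifs <;> ring

theorem Orthonormal.chained_of_dist_eq (he : Orthonormal ℝ e) {a γ β : ℝ}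
    (ha : a ^ 2 = 2 * β ^ 2 * (1 + γ + γ ^ 2)) (h1 : 2 * β ^ 2 * γ ^ 2 ≠ a ^ 2)
    (h2 : 2 * β ^ 2 ≠ a ^ 2) (h3 : 2 * β ^ 2 * (1 + γ ^ 2) ≠ a ^ 2) {i j k l : ι}
    (hij : i ≠ j) (hkl : k ≠ l)
    (hd : dist (β • e i - (β * γ) • e j) (β • e k - (β * γ) • e l) = a) :
    i = l ∨ j = k := by
  classical
  by_contra! hnc
  have hdist := he.dist_sq_of_not_chained β γ hij hkl hnc.1 hnc.2
  rw [hd] at hdist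
  -- `a = 0` would force `β = 0`, hence `2β² = a²`.
  have ha0 : a ^ 2 ≠ 0 := by
    intro h0
    have : 0 < 1 + γ + γ ^ 2 := by nlinarith [sq_nonneg (γ + 1 / 2)]
    exact h2 (by nlinarith)
  split_ifs at hdist
  · exact ha0 (by linear_combination hdist)
  · exact h1 (by linear_combination -hdist)
  · exact h2 (by linear_combination -hdist)
  · exact h3 (by linear_combination -hdist)

end

theorem not_chained_triangle {ι : Type*} [Preorder ι] {i j k l m n : ι}
    (hij : i < j) (hkl : k < l) (hmn : m < n)
    (hpq : i = l ∨ j = k) (hqr : k = n ∨ l = m) (hpr : i = n ∨ j = m) : False := by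
  rcases hpq with rfl | rfl <;> rcases hqr with rfl | rfl <;> rcases hpr with rfl | rfl <;>
    order

theorem YA_no_equilateral_triangle_general
    {H : Type*} [NormedAddCommGroup H] [InnerProductSpace ℝ H]
    (e : ℕ → H) (he : Orthonormal ℝ e)
    (a γ β : ℝ)
    (ha : a^2 = 2 * β^2 * (1 + γ + γ^2))
    (h1 : 2 * β^2 * γ^2 ≠ a^2) (h2 : 2 * β^2 ≠ a^2) (h3 : 2 * β^2 * (1 + γ^2) ≠ a^2)
    (YA : Set H)
    (hYA : YA = {v | ∃ i j : ℕ, i < j ∧ v = β • e i - (β * γ) • e j}) :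
    ¬ ∃ p ∈ YA, ∃ q ∈ YA, ∃ r ∈ YA,
        p ≠ q ∧ q ≠ r ∧ p ≠ r ∧
        dist p q = a ∧ dist q r = a ∧ dist p r = a := by
  subst hYA
  rintro ⟨_, ⟨i, j, hij, rfl⟩, _, ⟨k, l, hkl, rfl⟩, _, ⟨m, n, hmn, rfl⟩,
    -, -, -, hpq, hqr, hpr⟩
  exact not_chained_triangle hij hkl hmn
    (he.chained_of_dist_eq ha h1 h2 h3 hij.ne hkl.ne hpq)
    (he.chained_of_dist_eq ha h1 h2 h3 hkl.ne hmn.ne hqr)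
    (he.chained_of_dist_eq ha h1 h2 h3 hij.ne hmn.ne hpr)

/-- If none of the squared distances `2β²γ²`, `2β²`, `2β²(1+γ²)` equals `a² = 2β²(1+γ+γ²)`,
then the configuration `Y_A = {β e_i - βγ e_j : i < j}` contains no equilateral triangle with
side length `a`: no three points of `Y_A` are pairwise at distance `a`. -/
theorem YA_no_equilateral_triangle
    {H : Type*} [NormedAddCommGroup H] [InnerProductSpace ℝ H]
    (e : ℕ → H) (he : Orthonormal ℝ e)
    (a γ β : ℝ) (hβ : 0 < β) (hγ : 0 < γ)
    (ha : a^2 = 2 * β^2 * (1 + γ + γ^2))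
    (h1 : 2 * β^2 * γ^2 ≠ a^2) (h2 : 2 * β^2 ≠ a^2) (h3 : 2 * β^2 * (1 + γ^2) ≠ a^2)
    (YA : Set H)
    (hYA : YA = {v | ∃ i j : ℕ, i < j ∧ v = β • e i - (β * γ) • e j}) :
    ¬ ∃ p ∈ YA, ∃ q ∈ YA, ∃ r ∈ YA,
        p ≠ q ∧ q ≠ r ∧ p ≠ r ∧
        dist p q = a ∧ dist q r = a ∧ dist p r = a :=
  YA_no_equilateral_triangle_general e he a γ β ha h1 h2 h3 YA hYA
end

section
/- Let M = (m_{ij})_{0≤i,j≤d} be a symmetric real matrix with zero diagonal such that ∑_{0≤i<j≤d} m_{ij} λ_i λ_j < 0 for all (λ_0,…,λ_d) with ∑λ_i = 0 and ∑λ_i² = 1. Then there exists a set of d+1 affinely independent points x_0,…,x_d in ℝ^d with ‖x_i − x_j‖² = m_{ij} for all i ≠ j. -/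
/-!
Place `x₀` at the origin. For a simplex with squared distances `m`, polarization gives
`⟪xᵢ, xⱼ⟫ = (m₀ᵢ + m₀ⱼ - mᵢⱼ) / 2`, so the Gram matrix `G` of `x₁, …, x_d` is dictated by `m`.
Conversely, for `v ∈ ℝᵈ` put `λ = (-∑ vₖ, v₁, …, v_d)`, so that `∑ λᵢ = 0` and
`vᵀ G v = -∑_{i<j} mᵢⱼ λᵢ λⱼ`: the hypothesis says exactly that `G` is positive definite.
Factoring `G = Bᵀ B`, the columns of `B` realize `G` as a Gram matrix; they are linearly
independent because `G` is nonsingular, and the squared distances are recovered from `G`.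
-/

open Matrix Finset
open scoped InnerProductSpace ComplexOrder

/-- If `m i j = ‖x i - x j‖²`, then `sqDistGram m i₀ i j = ⟪x i - x i₀, x j - x i₀⟫`. -/
noncomputable def sqDistGram {ι : Type*} (m : ι → ι → ℝ) (i₀ : ι) : Matrix ι ι ℝ :=
  of fun i j => (m i₀ i + m i₀ j - m i j) / 2

section sqDistGram

variable {ι : Type*} {m : ι → ι → ℝ} {i₀ : ι}

theorem sqDistGram_apply_self (hdiag : ∀ i, m i i = 0) (i : ι) :
    sqDistGram m i₀ i i = m i₀ i := by
  simp [sqDistGram, hdiag]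

theorem sqDistGram_base_left (hdiag : ∀ i, m i i = 0) (j : ι) : sqDistGram m i₀ i₀ j = 0 := by
  simp [sqDistGram, hdiag]

theorem sqDistGram_base_right (hsymm : ∀ i j, m i j = m j i) (hdiag : ∀ i, m i i = 0) (i : ι) :
    sqDistGram m i₀ i i₀ = 0 := by
  simp [sqDistGram, hdiag, hsymm i i₀]

theorem dist_sq_eq_of_gram_eq_sqDistGram {E : Type*} [NormedAddCommGroup E]
    [InnerProductSpace ℝ E] {x : ι → E} (hdiag : ∀ i, m i i = 0)
    (hx : gram ℝ x = sqDistGram m i₀) (i j : ι) :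
    dist (x i) (x j) ^ 2 = m i j := by
  have hinner : ∀ k l, ⟪x k, x l⟫_ℝ = sqDistGram m i₀ k l := fun k l => by rw [← hx, gram_apply]
  rw [dist_eq_norm, norm_sub_sq_real, ← real_inner_self_eq_norm_sq, ← real_inner_self_eq_norm_sq,
    hinner, hinner, hinner, sqDistGram_apply_self hdiag, sqDistGram_apply_self hdiag]
  simp only [sqDistGram, of_apply]
  ring

theorem sum_sqDistGram_mul [Fintype ι] (lam : ι → ℝ) (hlam : ∑ i, lam i = 0) :
    ∑ i, ∑ j, sqDistGram m i₀ i j * lam i * lam j = -(∑ i, ∑ j, m i j * lam i * lam j) / 2 := by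
  have hsplit : ∀ i j, sqDistGram m i₀ i j * lam i * lam j =
      (m i₀ i * lam i) * lam j / 2 + lam i * (m i₀ j * lam j) / 2 - m i j * lam i * lam j / 2 :=
    fun i j => by simp only [sqDistGram, of_apply]; ring
  simp only [hsplit, sum_add_distrib, sum_sub_distrib, ← sum_div, ← mul_sum, ← sum_mul, hlam]
  ring

end sqDistGram

theorem sum_sum_eq_sum_filter_lt_add_self {ι M : Type*} [Fintype ι] [LinearOrder ι]
    [AddCommMonoid M] (f : ι → ι → M) (hf : ∀ i j, f i j = f j i) (hf₀ : ∀ i, f i i = 0) :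
    ∑ i, ∑ j, f i j = ∑ p ∈ univ.filter (fun p : ι × ι => p.1 < p.2), f p.1 p.2
      + ∑ p ∈ univ.filter (fun p : ι × ι => p.1 < p.2), f p.1 p.2 := by
  rw [← Fintype.sum_prod_type', ← sum_filter_add_sum_filter_not univ (fun p : ι × ι => p.1 < p.2)]
  congr 1
  calc ∑ p ∈ univ.filter (fun p : ι × ι => ¬p.1 < p.2), f p.1 p.2
      = ∑ p ∈ univ.filter (fun p : ι × ι => p.2 < p.1), f p.1 p.2 := by
        refine (sum_subset (fun p => by simpa using le_of_lt) fun p hp hp' => ?_).symm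
        simp only [mem_filter, mem_univ, true_and, not_lt] at hp hp'
        rw [le_antisymm hp hp', hf₀]
    _ = _ := sum_nbij' Prod.swap Prod.swap (by simp) (by simp) (by simp) (by simp)
        fun p _ => hf _ _

theorem sum_filter_lt_neg_of_ne_zero {ι : Type*} [Fintype ι] [LinearOrder ι] {m : ι → ι → ℝ}
    (hneg : ∀ lam : ι → ℝ, ∑ i, lam i = 0 → ∑ i, (lam i)^2 = 1 →
      ∑ p ∈ univ.filter (fun p : ι × ι => p.1 < p.2), m p.1 p.2 * lam p.1 * lam p.2 < 0)
    (lam : ι → ℝ) (hsum : ∑ i, lam i = 0) (hne : lam ≠ 0) :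
    ∑ p ∈ univ.filter (fun p : ι × ι => p.1 < p.2), m p.1 p.2 * lam p.1 * lam p.2 < 0 := by
  set s := ∑ i, lam i ^ 2
  have hs : 0 < s := by
    obtain ⟨i, hi⟩ := Function.ne_iff.mp hne
    exact sum_pos' (fun j _ => sq_nonneg _) ⟨i, mem_univ _, sq_pos_of_ne_zero hi⟩
  set c := √s
  have hc : c ≠ 0 := (Real.sqrt_pos.mpr hs).ne'
  have hunit := hneg (fun i => lam i / c) (by simp [← sum_div, hsum])
    (by simp [div_pow, ← sum_div, c, Real.sq_sqrt hs.le, s, hs.ne'])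
  have hscale : ∑ p ∈ univ.filter (fun p : ι × ι => p.1 < p.2), m p.1 p.2 * lam p.1 * lam p.2 =
      s * ∑ p ∈ univ.filter (fun p : ι × ι => p.1 < p.2),
        m p.1 p.2 * (lam p.1 / c) * (lam p.2 / c) := by
    rw [mul_sum]
    refine sum_congr rfl fun p _ => ?_
    field_simp
    rw [Real.sq_sqrt hs.le]
  rw [hscale]
  exact mul_neg_of_pos_of_neg hs hunit

theorem Matrix.PosSemidef.exists_gram_eq {𝕜 n : Type*} [RCLike 𝕜] [Fintype n]
    {G : Matrix n n 𝕜} (hG : G.PosSemidef) : ∃ v : n → EuclideanSpace 𝕜 n, gram 𝕜 v = G := by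
  classical
  open scoped MatrixOrder in
  obtain ⟨B, rfl⟩ := CStarAlgebra.nonneg_iff_eq_star_mul_self.mp hG.nonneg
  refine ⟨fun k => WithLp.toLp 2 fun r => B r k, ?_⟩
  rw [gram_eq_conjTranspose_mul (EuclideanSpace.basisFun n 𝕜)]
  rfl

theorem affineIndependent_cons_zero {k V : Type*} [Ring k] [AddCommGroup V] [Module k V] {n : ℕ}
    {v : Fin n → V} (hv : LinearIndependent k v) :
    AffineIndependent k (Fin.cons 0 v : Fin (n + 1) → V) := by
  rw [affineIndependent_iff_linearIndependent_vsub k _ 0,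
    ← linearIndependent_equiv (finSuccAboveEquiv (0 : Fin (n + 1)))]
  convert hv
  ext
  simp [finSuccAboveEquiv_apply]

theorem posDef_sqDistGram_submatrix_succ {n : ℕ} {m : Fin (n + 1) → Fin (n + 1) → ℝ}
    (hsymm : ∀ i j, m i j = m j i) (hdiag : ∀ i, m i i = 0)
    (hneg : ∀ lam : Fin (n + 1) → ℝ, ∑ i, lam i = 0 → lam ≠ 0 →
      ∑ p ∈ univ.filter (fun p : Fin (n + 1) × Fin (n + 1) => p.1 < p.2),
        m p.1 p.2 * lam p.1 * lam p.2 < 0) :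
    ((sqDistGram m 0).submatrix Fin.succ Fin.succ).PosDef := by
  refine .of_dotProduct_mulVec_pos ?_ fun v hv => ?_
  · ext i j
    simp only [conjTranspose_apply, submatrix_apply, sqDistGram, of_apply, star_trivial,
      hsymm j.succ i.succ]
    ring
  set lam : Fin (n + 1) → ℝ := Fin.cons (-∑ k, v k) v
  have hlam_sum : ∑ i, lam i = 0 := by simp [lam, Fin.sum_univ_succ]
  have hlam_ne : lam ≠ 0 := fun h => hv (funext fun k => by simpa [lam] using congr_fun h k.succ)
  have hform : star v ⬝ᵥ (sqDistGram m 0).submatrix Fin.succ Fin.succ *ᵥ v =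
      ∑ i, ∑ j, sqDistGram m 0 i j * lam i * lam j := by
    simp only [Fin.sum_univ_succ, lam, Fin.cons_zero, Fin.cons_succ, sqDistGram_base_left hdiag,
      sqDistGram_base_right hsymm hdiag, zero_mul, sum_const_zero, zero_add, dotProduct, mulVec,
      star_trivial, submatrix_apply, mul_sum]
    exact sum_congr rfl fun i _ => sum_congr rfl fun j _ => by ring
  rw [hform, sum_sqDistGram_mul lam hlam_sum, sum_sum_eq_sum_filter_lt_add_self _
    (fun i j => by rw [hsymm]; ring) (fun i => by rw [hdiag]; ring)]
  linarith [hneg lam hlam_sum hlam_ne]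

/-- Schoenberg's theorem (strict case): a symmetric matrix with zero diagonal whose quadratic
form is strictly negative on the hyperplane `∑ λᵢ = 0` (intersected with the unit sphere) is
the squared-distance matrix of a nondegenerate `d`-dimensional simplex in `ℝ^d`. -/
theorem schoenberg_strict_negative_type
    (d : ℕ) (m : Fin (d+1) → Fin (d+1) → ℝ)
    (hsymm : ∀ i j, m i j = m j i) (hdiag : ∀ i, m i i = 0)
    (hneg : ∀ lam : Fin (d+1) → ℝ, ∑ i, lam i = 0 → ∑ i, (lam i)^2 = 1 →
      ∑ p ∈ Finset.univ.filter (fun p : Fin (d+1) × Fin (d+1) => p.1 < p.2),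
        m p.1 p.2 * lam p.1 * lam p.2 < 0) :
    ∃ x : Fin (d+1) → EuclideanSpace ℝ (Fin d),
      AffineIndependent ℝ x ∧ ∀ i j, i ≠ j → (dist (x i) (x j))^2 = m i j := by
  have hG := posDef_sqDistGram_submatrix_succ hsymm hdiag (sum_filter_lt_neg_of_ne_zero hneg)
  obtain ⟨v, hv⟩ := hG.posSemidef.exists_gram_eq
  have hx : gram ℝ (Fin.cons 0 v : Fin (d + 1) → EuclideanSpace ℝ (Fin d)) = sqDistGram m 0 := by
    ext i j
    cases i using Fin.cases <;> cases j using Fin.cases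
    case succ.succ k l => exact congr_fun₂ hv k l
    all_goals simp [sqDistGram_base_left hdiag, sqDistGram_base_right hsymm hdiag]
  exact ⟨_, affineIndependent_cons_zero (linearIndependent_of_posDef_gram (hv ▸ hG)),
    fun i j _ => dist_sq_eq_of_gram_eq_sqDistGram hdiag hx i j⟩
end

section
/- Let a > 0, γ > 0, β = a/√(2(1+γ+γ²)), and let Y' be any finite subset of Y_A = { β e_i − βγ e_j : i < j }. Then there exists Z ⊆ Y' with |Z| ≥ |Y'|/4 such that no two points of Z are at distance exactly a. -/
/-!
If `j ≠ k` and `l ≠ i`, the vectors `e i - e k` and `e j - e l` are orthogonal, so the points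
`y = β • e i - (β * γ) • e j` and `y' = β • e k - (β * γ) • e l` satisfy
`‖y - y'‖² ≤ 2β²(1 + γ²) < 2β²(1 + γ + γ²) = a²`: distance `a` only occurs between pairs that are
adjacent in the shift graph. For a random set `c` of indices, keep the pairs `(i, j)` with
`i ∉ c` and `j ∈ c`; each pair survives with probability `1/4` and no two survivors are adjacent,
so some `c` keeps a quarter of `Y'`.
-/

open Finset

theorem Finset.four_mul_card_powerset_filter_notMem_and_mem {β : Type*} [DecidableEq β]
    {T : Finset β} {i j : β} (hi : i ∈ T) (hj : j ∈ T) (hij : i ≠ j) :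
    4 * #{c ∈ T.powerset | i ∉ c ∧ j ∈ c} = 2 ^ #T := by
  set U := (T.erase i).erase j
  have hjU : j ∉ U := notMem_erase j _
  have hiU : i ∉ insert j U := by simp [U, hij]
  have hT : T = insert i (insert j U) := by
    rw [insert_erase (mem_erase.2 ⟨hij.symm, hj⟩), insert_erase hi]
  -- of `t`, `insert j t`, `insert i t`, `insert i (insert j t)` (`t ⊆ U`) only the second counts
  have hcount : #{c ∈ T.powerset | i ∉ c ∧ j ∈ c} = #U.powerset := by
    rw [card_filter, hT, sum_powerset_insert hiU, sum_powerset_insert hjU,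
      sum_powerset_insert hjU, card_eq_sum_ones]
    have hsub : ∀ t ∈ U.powerset, i ∉ t ∧ j ∉ t := fun t ht =>
      ⟨fun h => hiU (mem_insert_of_mem (mem_powerset.1 ht h)), fun h => hjU (mem_powerset.1 ht h)⟩
    rw [sum_congr rfl fun t ht => if_neg fun h => (hsub t ht).2 h.2,
      sum_congr rfl fun t ht => if_pos ⟨by simp [hij, (hsub t ht).1], mem_insert_self j t⟩,
      sum_congr rfl fun t _ => if_neg fun h => h.1 (mem_insert_self i t),
      sum_congr rfl fun t _ => if_neg fun h => h.1 (mem_insert_self i _)]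
    simp
  rw [hcount, card_powerset, hT, card_insert_of_notMem hiU, card_insert_of_notMem hjU]
  ring

theorem Finset.exists_subset_card_le_four_mul_forall_ne {α β : Type*} [DecidableEq β]
    (s : Finset α) (u w : α → β) (huw : ∀ x ∈ s, u x ≠ w x) :
    ∃ t ⊆ s, #s ≤ 4 * #t ∧ ∀ x ∈ t, ∀ y ∈ t, w x ≠ u y := by
  set T := s.image u ∪ s.image w
  have hdouble : ∑ c ∈ T.powerset, 4 * #{x ∈ s | u x ∉ c ∧ w x ∈ c} = ∑ _c ∈ T.powerset, #s := by
    simp_rw [card_filter, mul_sum]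
    rw [sum_comm, sum_const, card_powerset, smul_eq_mul, mul_comm, ← smul_eq_mul, ← sum_const]
    refine sum_congr rfl fun x hx => ?_
    rw [← mul_sum, ← card_filter]
    exact four_mul_card_powerset_filter_notMem_and_mem (mem_union_left _ (mem_image_of_mem u hx))
      (mem_union_right _ (mem_image_of_mem w hx)) (huw x hx)
  obtain ⟨c, -, hc⟩ := exists_le_of_sum_le (powerset_nonempty T) hdouble.ge
  exact ⟨{x ∈ s | u x ∉ c ∧ w x ∈ c}, filter_subset _ _, hc, fun x hx y hy hxy => by
    rw [mem_filter] at hx hy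
    exact hy.2.1 (hxy ▸ hx.2.2)⟩

section Orthonormal

variable {ι H : Type*} [NormedAddCommGroup H] [InnerProductSpace ℝ H] {e : ι → H}

theorem Orthonormal.norm_sub_sq_le_two (he : Orthonormal ℝ e) (i k : ι) :
    ‖e i - e k‖ ^ 2 ≤ 2 := by
  classical
  have hik : 0 ≤ inner ℝ (e i) (e k) := by
    rw [orthonormal_iff_ite.1 he]
    split_ifs <;> norm_num
  rw [norm_sub_sq_real, he.1 i, he.1 k]
  linarith

theorem Orthonormal.inner_sub_sub_eq_zero (he : Orthonormal ℝ e) {i j k l : ι}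
    (hij : i ≠ j) (hil : i ≠ l) (hkj : k ≠ j) (hkl : k ≠ l) :
    inner ℝ (e i - e k) (e j - e l) = 0 := by
  simp only [inner_sub_left, inner_sub_right, he.2 hij, he.2 hil, he.2 hkj, he.2 hkl, sub_zero]

theorem Orthonormal.dist_sq_le (he : Orthonormal ℝ e) (β γ : ℝ) {i j k l : ι}
    (hij : i ≠ j) (hil : i ≠ l) (hkj : k ≠ j) (hkl : k ≠ l) :
    dist (β • e i - (β * γ) • e j) (β • e k - (β * γ) • e l) ^ 2 ≤ 2 * β ^ 2 * (1 + γ ^ 2) := by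
  have hdiff : β • e i - (β * γ) • e j - (β • e k - (β * γ) • e l) =
      β • (e i - e k - γ • (e j - e l)) := by
    simp only [smul_sub, mul_smul]; abel
  have hpyth : ‖e i - e k - γ • (e j - e l)‖ ^ 2 = ‖e i - e k‖ ^ 2 + γ ^ 2 * ‖e j - e l‖ ^ 2 := by
    rw [sq, sq, sq, norm_sub_sq_eq_norm_sq_add_norm_sq_real
      (by rw [real_inner_smul_right, he.inner_sub_sub_eq_zero hij hil hkj hkl, mul_zero]),
      norm_smul, Real.norm_eq_abs, ← abs_mul_abs_self γ]
    ring
  rw [dist_eq_norm, hdiff, norm_smul, mul_pow, Real.norm_eq_abs, sq_abs, hpyth]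
  have := he.norm_sub_sq_le_two i k
  have := he.norm_sub_sq_le_two j l
  nlinarith [sq_nonneg β, sq_nonneg γ, mul_nonneg (sq_nonneg β) (sq_nonneg γ)]

end Orthonormal

/-- Every finite subset `Y'` of the configuration `Y_A = {β e_i - βγ e_j : i < j}` contains a
subset `Z` of size at least `|Y'|/4` with no two points at distance exactly `a`. -/
theorem YA_large_subset_without_distance_a
    {H : Type*} [NormedAddCommGroup H] [InnerProductSpace ℝ H]
    (e : ℕ → H) (he : Orthonormal ℝ e)
    (a γ β : ℝ) (ha : 0 < a) (hγ : 0 < γ)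
    (hβ : β = a / Real.sqrt (2 * (1 + γ + γ^2)))
    (YA : Set H)
    (hYA : YA = {v | ∃ i j : ℕ, i < j ∧ v = β • e i - (β * γ) • e j})
    (Y' : Finset H) (hY' : ↑Y' ⊆ YA) :
    ∃ Z ⊆ Y', (Y'.card : ℝ) / 4 ≤ (Z.card : ℝ) ∧
      ∀ p ∈ Z, ∀ q ∈ Z, p ≠ q → dist p q ≠ a := by
  have hrep : ∀ v ∈ Y', ∃ i j : ℕ, i < j ∧ v = β • e i - (β * γ) • e j := fun v hv => by
    simpa [hYA] using hY' hv
  choose! I J hIJ hv using hrep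
  obtain ⟨Z, hZ, hcard, hZind⟩ :=
    Y'.exists_subset_card_le_four_mul_forall_ne I J fun v hv => (hIJ v hv).ne
  have hX : 0 < 2 * (1 + γ + γ ^ 2) := by positivity
  have hβpos : 0 < β := hβ ▸ div_pos ha (Real.sqrt_pos.2 hX)
  have ha2 : a ^ 2 = 2 * β ^ 2 * (1 + γ + γ ^ 2) := by
    rw [hβ, div_pow, Real.sq_sqrt hX.le]
    field_simp
  refine ⟨Z, hZ, (div_le_iff₀' four_pos).2 (mod_cast hcard), fun p hp q hq _ hpq => ?_⟩
  have hle := he.dist_sq_le β γ (hIJ p (hZ hp)).ne (hZind q hq p hp).symm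
    (hZind p hp q hq).symm (hIJ q (hZ hq)).ne
  rw [← hv p (hZ hp), ← hv q (hZ hq), hpq, ha2] at hle
  nlinarith [mul_pos (pow_pos hβpos 2) hγ]
end

section
/- Let a, γ > 0, β = a/√(2(1+γ+γ²)), and Y_A = { β e_i − βγ e_j : i < j } ⊆ ℓ². Then the diameter of Y_A equals a, i.e., sup over pairs of distinct points of Y_A of their distance is a, and this supremum is attained. -/
open RealInnerProductSpace

/-! For `p = b e_i - c e_j`, `q = b e_k - c e_l` with `b = β`, `c = βγ`, orthonormality gives
`‖p - q‖² = 2(b² + c²) - 2⟪p, q⟫`, and `-⟪p, q⟫` is at most `bc` times the number of coincidences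
`i = l`, `j = k`. Since `i < j` and `k < l` forbid both at once, `‖p - q‖² ≤ 2(b² + bc + c²) = a²`,
with equality for `p = b e_0 - c e_1`, `q = b e_1 - c e_2`. -/

namespace Orthonormal

variable {H : Type*} [NormedAddCommGroup H] [InnerProductSpace ℝ H] {e : ℕ → H}

theorem inner_smul_sub_smul_s19 (he : Orthonormal ℝ e) (b c : ℝ) (i j k l : ℕ) :
    ⟪b • e i - c • e j, b • e k - c • e l⟫ =
      (if i = k then b ^ 2 else 0) - (if i = l then b * c else 0)
        - (if j = k then b * c else 0) + (if j = l then c ^ 2 else 0) := by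
  rw [orthonormal_iff_ite] at he
  simp only [inner_sub_left, inner_sub_right, real_inner_smul_left, real_inner_smul_right, he]
  split_ifs <;> ring

theorem norm_smul_sub_smul_sq_s19 (he : Orthonormal ℝ e) (b c : ℝ) {i j : ℕ} (hij : i ≠ j) :
    ‖b • e i - c • e j‖ ^ 2 = b ^ 2 + c ^ 2 := by
  rw [← real_inner_self_eq_norm_sq, he.inner_smul_sub_smul_s19]
  simp [hij, hij.symm]

theorem dist_smul_sub_smul_sq (he : Orthonormal ℝ e) (b c : ℝ) {i j k l : ℕ}
    (hij : i ≠ j) (hkl : k ≠ l) :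
    dist (b • e i - c • e j) (b • e k - c • e l) ^ 2 =
      2 * (b ^ 2 + c ^ 2) - 2 * ⟪b • e i - c • e j, b • e k - c • e l⟫ := by
  rw [dist_eq_norm, norm_sub_sq_real, he.norm_smul_sub_smul_sq_s19 b c hij,
    he.norm_smul_sub_smul_sq_s19 b c hkl]
  ring

theorem dist_smul_sub_smul_sq_le (he : Orthonormal ℝ e) {b c : ℝ} (hbc : 0 ≤ b * c)
    {i j k l : ℕ} (hij : i < j) (hkl : k < l) :
    dist (b • e i - c • e j) (b • e k - c • e l) ^ 2 ≤ 2 * (b ^ 2 + b * c + c ^ 2) := by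
  rw [he.dist_smul_sub_smul_sq b c hij.ne hkl.ne, he.inner_smul_sub_smul_s19]
  have hb := sq_nonneg b
  have hc := sq_nonneg c
  split_ifs <;> first | omega | nlinarith

theorem dist_smul_sub_smul_sq_of_lt_of_lt (he : Orthonormal ℝ e) (b c : ℝ) {i j k : ℕ}
    (hij : i < j) (hjk : j < k) :
    dist (b • e i - c • e j) (b • e j - c • e k) ^ 2 = 2 * (b ^ 2 + b * c + c ^ 2) := by
  rw [he.dist_smul_sub_smul_sq b c hij.ne hjk.ne, he.inner_smul_sub_smul_s19]
  simp [hij.ne, hjk.ne, (hij.trans hjk).ne]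
  ring

end Orthonormal

/-- The diameter of the configuration `Y_A = {β e_i - βγ e_j : i < j}` equals
`a = β√(2(1+γ+γ²))`: all pairwise distances are at most `a`, and the distance `a` is attained
by a pair of distinct points. -/
theorem YA_diameter_eq_a
    {H : Type*} [NormedAddCommGroup H] [InnerProductSpace ℝ H]
    (e : ℕ → H) (he : Orthonormal ℝ e)
    (a γ β : ℝ) (ha : 0 < a) (hγ : 0 < γ)
    (hβ : β = a / Real.sqrt (2 * (1 + γ + γ^2)))
    (YA : Set H)
    (hYA : YA = {v | ∃ i j : ℕ, i < j ∧ v = β • e i - (β * γ) • e j}) :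
    (∀ p ∈ YA, ∀ q ∈ YA, dist p q ≤ a) ∧
    (∃ p ∈ YA, ∃ q ∈ YA, p ≠ q ∧ dist p q = a) := by
  have ha_sq : 2 * (β ^ 2 + β * (β * γ) + (β * γ) ^ 2) = a ^ 2 := by
    have hpos : 0 < 2 * (1 + γ + γ ^ 2) := by positivity
    have hβ_sq : β ^ 2 * (2 * (1 + γ + γ ^ 2)) = a ^ 2 := by
      rw [hβ, div_pow, Real.sq_sqrt hpos.le, div_mul_cancel₀ _ hpos.ne']
    linear_combination hβ_sq
  subst hYA
  refine ⟨?_, ⟨_, ⟨0, 1, zero_lt_one, rfl⟩, _, ⟨1, 2, one_lt_two, rfl⟩, ?_⟩⟩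
  · rintro _ ⟨i, j, hij, rfl⟩ _ ⟨k, l, hkl, rfl⟩
    have hbc : 0 ≤ β * (β * γ) := by rw [← mul_assoc]; exact mul_nonneg (mul_self_nonneg β) hγ.le
    refine (pow_le_pow_iff_left₀ dist_nonneg ha.le two_ne_zero).1 ?_
    exact ha_sq ▸ he.dist_smul_sub_smul_sq_le hbc hij hkl
  · have hdist : dist (β • e 0 - (β * γ) • e 1) (β • e 1 - (β * γ) • e 2) = a :=
      (pow_left_inj₀ dist_nonneg ha.le two_ne_zero).1 <|
        ha_sq ▸ he.dist_smul_sub_smul_sq_of_lt_of_lt β (β * γ) zero_lt_one one_lt_two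
    exact ⟨dist_pos.1 (hdist ▸ ha), hdist⟩
end
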